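/- arXiv:math/0012127 — 3 statements merged into one kernel-verified Lean document; each statement's English description precedes it below -/
import Mathlib

section
/- Let X be a compact Hausdorff space and A a unital C*-algebra with a unital C(X)-structure ι : C(X,ℂ) → A. Then for every a ∈ A: (i) for every x ∈ X, the fibre norm satisfies ‖a_x‖ = inf{‖(1 − ι(f) + f(x)·1)·a‖ : f ∈ C(X,ℂ)}; and (ii) the function x ↦ ‖a_x‖ is upper semi-continuous on X. -/
open Metric Set


variable {X : Type*} [TopologicalSpace X] [CompactSpace X] [T2Space X]
variable {A : Type*} [CStarAlgebra A]

/-- `fiberIdeal ι x` is the smallest closed two-sided ideal `I_x` of `A` containing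
`{ι f : f ∈ C(X,ℂ), f x = 0}`: the intersection of all closed two-sided ideals
containing that set. -/
def fiberIdeal (ι : C(X, ℂ) →⋆ₐ[ℂ] A) (x : X) : Set A :=
  ⋂₀ {S : Set A | IsClosed S ∧ (∃ I : TwoSidedIdeal A, (I : Set A) = S) ∧
      {a : A | ∃ f : C(X, ℂ), f x = 0 ∧ a = ι f} ⊆ S}

/-- The fibre norm `‖a_x‖ = dist (a, I_x)`, the quotient norm of the image of `a`
in `A / I_x`. -/
noncomputable def fiberNorm (ι : C(X, ℂ) →⋆ₐ[ℂ] A) (x : X) (a : A) : ℝ :=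
  Metric.infDist a (fiberIdeal ι x)

section Stmt7Proof

set_option linter.unusedSectionVars false

variable (ι : C(X, ℂ) →⋆ₐ[ℂ] A)

private lemma norm_one_sub_le' (f : C(X,ℂ)) (hf : ∀ y, ‖1 - f y‖ ≤ 1) :
    ‖(1:A) - ι f‖ ≤ 1 := by
  have h : (1:A) - ι f = ι (1 - f) := by rw [map_sub, map_one]
  rw [h]
  refine (NonUnitalStarAlgHom.norm_apply_le ι _).trans ?_
  rw [ContinuousMap.norm_le _ zero_le_one]
  intro y; simpa using hf y

private lemma zero_mem_fiberIdeal' (x : X) : (0:A) ∈ fiberIdeal ι x := by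
  intro S hS
  obtain ⟨-, ⟨I, hI⟩, -⟩ := hS
  rw [← hI]; exact I.zero_mem

/-- direction ≤ : the fiber norm is at most each term of the infimum. -/
private lemma fiberNorm_le' (x : X) (a : A) (f : C(X,ℂ)) :
    fiberNorm ι x a ≤ ‖(1 - ι f + f x • (1 : A)) * a‖ := by
  show Metric.infDist a (fiberIdeal ι x) ≤ _
  set g : C(X,ℂ) := f - f x • 1 with hg
  have hgx : g x = 0 := by simp [hg]
  have hιg : ι g = ι f - f x • 1 := by
    rw [hg, map_sub, map_smul, map_one]
  have hmem : ι g * a ∈ fiberIdeal ι x := by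
    intro S hS
    obtain ⟨-, ⟨I, hI⟩, hsub⟩ := hS
    have h1 : ι g ∈ S := hsub ⟨g, hgx, rfl⟩
    rw [← hI] at h1 ⊢
    exact I.mul_mem_right _ _ h1
  have h2 : Metric.infDist a (fiberIdeal ι x) ≤ dist a (ι g * a) :=
    infDist_le_dist_of_mem hmem
  have h3 : dist a (ι g * a) = ‖(1 - ι f + f x • (1 : A)) * a‖ := by
    rw [dist_eq_norm, hιg]
    congr 1
    rw [sub_mul, add_mul, sub_mul, one_mul, smul_mul_assoc, one_mul]
    abel
  rwa [h3] at h2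

/-- the generating set of products -/
private def genSet (x : X) : Set A := {b : A | ∃ g : C(X,ℂ), g x = 0 ∧ ∃ c : A, b = ι g * c}

/-- the closed span -/
private def Jc (x : X) : Set A := closure (Submodule.span ℂ (genSet ι x) : Set A)

private lemma mul_left_mem_span (hcentral : ∀ (f : C(X, ℂ)) (a : A), ι f * a = a * ι f)
    (x : X) (r : A) {b : A} (hb : b ∈ Submodule.span ℂ (genSet ι x)) :
    r * b ∈ Submodule.span ℂ (genSet ι x) := by
  induction hb using Submodule.span_induction with
  | mem y hy =>
    obtain ⟨g, hgx, c, rfl⟩ := hy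
    refine Submodule.subset_span ⟨g, hgx, r * c, ?_⟩
    rw [← mul_assoc, ← hcentral, mul_assoc]
  | zero => simp only [mul_zero]; exact Submodule.zero_mem _
  | add y z _hy _hz hy hz => rw [mul_add]; exact Submodule.add_mem _ hy hz
  | smul c y _hy hy => rw [mul_smul_comm]; exact Submodule.smul_mem _ _ hy

private lemma mul_right_mem_span (x : X) (r : A) {b : A}
    (hb : b ∈ Submodule.span ℂ (genSet ι x)) :
    b * r ∈ Submodule.span ℂ (genSet ι x) := by
  induction hb using Submodule.span_induction with
  | mem y hy =>
    obtain ⟨g, hgx, c, rfl⟩ := hy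
    exact Submodule.subset_span ⟨g, hgx, c * r, by rw [mul_assoc]⟩
  | zero => simp only [zero_mul]; exact Submodule.zero_mem _
  | add y z _hy _hz hy hz => rw [add_mul]; exact Submodule.add_mem _ hy hz
  | smul c y _hy hy => rw [smul_mul_assoc]; exact Submodule.smul_mem _ _ hy

private lemma fiberIdeal_subset_Jc (hcentral : ∀ (f : C(X, ℂ)) (a : A), ι f * a = a * ι f)
    (x : X) : fiberIdeal ι x ⊆ Jc ι x := by
  intro b hb
  refine hb _ ⟨isClosed_closure, ⟨?_, ?_⟩⟩
  · refine ⟨TwoSidedIdeal.mk' (Jc ι x) ?_ ?_ ?_ ?_ ?_, ?_⟩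
    · exact subset_closure (Submodule.zero_mem _)
    · intro u v hu hv
      exact map_mem_closure₂ continuous_add hu hv
        (fun p hp q hq => Submodule.add_mem _ hp hq)
    · intro u hu
      exact map_mem_closure continuous_neg hu (fun p hp => Submodule.neg_mem _ hp)
    · intro u v hv
      exact map_mem_closure (continuous_mul_left u) hv
        (fun w hw => mul_left_mem_span ι hcentral x u hw)
    · intro u v hu
      exact map_mem_closure (f := fun w => w * v) (continuous_mul_right v) hu
        (fun w hw => mul_right_mem_span ι x v hw)
    · exact TwoSidedIdeal.coe_mk' _ _ _ _ _ _
  · rintro b ⟨g, hgx, rfl⟩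
    exact subset_closure (Submodule.subset_span ⟨g, hgx, 1, (mul_one _).symm⟩)

/-- key approximation property on the span -/
private lemma key_span (hcentral : ∀ (f : C(X, ℂ)) (a : A), ι f * a = a * ι f)
    (x : X) {b : A} (hb : b ∈ Submodule.span ℂ (genSet ι x)) :
    ∀ ε : ℝ, 0 < ε → ∃ f : C(X,ℂ), f x = 0 ∧ ‖(1:A) - ι f‖ ≤ 1 ∧ ‖((1:A) - ι f) * b‖ ≤ ε := by
  induction hb using Submodule.span_induction with
  | mem y hy =>
    obtain ⟨g, hgx, c, rfl⟩ := hy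
    intro ε hε
    set δ : ℝ := ε / (‖c‖ + 1) with hδ
    have hδpos : 0 < δ := div_pos hε (by positivity)
    -- Urysohn function
    have hclt : IsClosed {y : X | δ ≤ ‖g y‖} :=
      isClosed_le continuous_const (continuous_norm.comp (map_continuous g))
    have hd : Disjoint ({x} : Set X) {y : X | δ ≤ ‖g y‖} := by
      rw [Set.disjoint_singleton_left]
      simp only [Set.mem_setOf_eq, not_le, hgx, norm_zero]
      exact hδpos
    obtain ⟨h, hh0, hh1, hh01⟩ :=
      exists_continuous_zero_one_of_isClosed isClosed_singleton hclt hd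
    set f : C(X, ℂ) := ⟨fun y => (h y : ℂ), Complex.continuous_ofReal.comp (map_continuous h)⟩
      with hf
    have hx0 : h x = 0 := by simpa using hh0 (Set.mem_singleton x)
    have hfx : f x = 0 := by simp [hf, hx0]
    have hfb : ∀ y, ‖1 - f y‖ ≤ 1 := by
      intro y
      obtain ⟨h0, h1⟩ := hh01 y
      simp only [hf, ContinuousMap.coe_mk]
      rw [show (1 : ℂ) - (h y : ℂ) = ((1 - h y : ℝ) : ℂ) by push_cast; ring,
        Complex.norm_real, Real.norm_eq_abs, abs_of_nonneg (by linarith)]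
      linarith
    refine ⟨f, hfx, norm_one_sub_le' ι f hfb, ?_⟩
    have hfac : ((1:A) - ι f) * (ι g * c) = ι ((1 - f) * g) * c := by
      rw [map_mul, map_sub, map_one, mul_assoc]
    have hnorm : ‖(1 - f) * g‖ ≤ δ := by
      rw [ContinuousMap.norm_le _ hδpos.le]
      intro y
      by_cases hy : δ ≤ ‖g y‖
      · have h1y : (1:ℂ) - f y = 0 := by simp [hf, hh1 hy]
        rw [ContinuousMap.mul_apply, ContinuousMap.sub_apply, ContinuousMap.one_apply,
          h1y, zero_mul, norm_zero]
        exact hδpos.le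
      · push_neg at hy
        simp only [ContinuousMap.mul_apply, ContinuousMap.sub_apply,
          ContinuousMap.one_apply]
        rw [norm_mul]
        calc ‖1 - f y‖ * ‖g y‖ ≤ 1 * ‖g y‖ :=
              mul_le_mul_of_nonneg_right (hfb y) (norm_nonneg _)
          _ = ‖g y‖ := one_mul _
          _ ≤ δ := hy.le
    rw [hfac]
    calc ‖ι ((1 - f) * g) * c‖ ≤ ‖ι ((1 - f) * g)‖ * ‖c‖ := norm_mul_le _ _
      _ ≤ ‖(1 - f) * g‖ * ‖c‖ :=
          mul_le_mul_of_nonneg_right (NonUnitalStarAlgHom.norm_apply_le ι _) (norm_nonneg _)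
      _ ≤ δ * ‖c‖ := mul_le_mul_of_nonneg_right hnorm (norm_nonneg _)
      _ ≤ δ * (‖c‖ + 1) := mul_le_mul_of_nonneg_left (by linarith) hδpos.le
      _ = ε := by rw [hδ, mul_comm, mul_div_cancel₀ _ (by positivity : ((0:ℝ) < ‖c‖ + 1)).ne']
  | zero =>
    intro ε hε
    exact ⟨0, by simp, by simpa using norm_one_sub_le' ι 0 (by simp), by simpa using hε.le⟩
  | add y z _hy _hz hy hz =>
    intro ε hε
    obtain ⟨f₁, hf₁x, hf₁n, hf₁⟩ := hy (ε/2) (by positivity)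
    obtain ⟨f₂, hf₂x, hf₂n, hf₂⟩ := hz (ε/2) (by positivity)
    set f : C(X,ℂ) := f₁ + f₂ - f₁ * f₂ with hf
    have hfx : f x = 0 := by simp [hf, hf₁x, hf₂x]
    have e₁ : (1:A) - ι f₁ = ι (1 - f₁) := by rw [map_sub, map_one]
    have e₂ : (1:A) - ι f₂ = ι (1 - f₂) := by rw [map_sub, map_one]
    have hC : (1 - f₁) * (1 - f₂) = 1 - f := by rw [hf]; ring
    have hfactor : (1:A) - ι f = ((1:A) - ι f₁) * ((1:A) - ι f₂) :=
      calc (1:A) - ι f = ι 1 - ι f := by rw [map_one]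
        _ = ι (1 - f) := (map_sub ι 1 f).symm
        _ = ι ((1 - f₁) * (1 - f₂)) := by rw [hC]
        _ = ι (1 - f₁) * ι (1 - f₂) := map_mul ι _ _
        _ = ((1:A) - ι f₁) * ((1:A) - ι f₂) := by rw [← e₁, ← e₂]
    have hcomm : ((1:A) - ι f₁) * ((1:A) - ι f₂) = ((1:A) - ι f₂) * ((1:A) - ι f₁) := by
      rw [e₁, e₂, ← map_mul, ← map_mul, mul_comm]
    have hnf : ‖(1:A) - ι f‖ ≤ 1 := by
      rw [hfactor]
      calc ‖((1:A) - ι f₁) * ((1:A) - ι f₂)‖ ≤ ‖(1:A) - ι f₁‖ * ‖(1:A) - ι f₂‖ :=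
            norm_mul_le _ _
        _ ≤ 1 * 1 := mul_le_mul hf₁n hf₂n (norm_nonneg _) zero_le_one
        _ = 1 := one_mul 1
    refine ⟨f, hfx, hnf, ?_⟩
    rw [hfactor, mul_add]
    calc ‖((1:A) - ι f₁) * ((1:A) - ι f₂) * y + ((1:A) - ι f₁) * ((1:A) - ι f₂) * z‖
        ≤ ‖((1:A) - ι f₁) * ((1:A) - ι f₂) * y‖ + ‖((1:A) - ι f₁) * ((1:A) - ι f₂) * z‖ :=
          norm_add_le _ _
      _ ≤ ε/2 + ε/2 := by
          gcongr
          · rw [hcomm, mul_assoc]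
            calc ‖((1:A) - ι f₂) * (((1:A) - ι f₁) * y)‖
                ≤ ‖(1:A) - ι f₂‖ * ‖((1:A) - ι f₁) * y‖ := norm_mul_le _ _
              _ ≤ 1 * (ε/2) := mul_le_mul hf₂n hf₁ (norm_nonneg _) zero_le_one
              _ = ε/2 := one_mul _
          · rw [mul_assoc]
            calc ‖((1:A) - ι f₁) * (((1:A) - ι f₂) * z)‖
                ≤ ‖(1:A) - ι f₁‖ * ‖((1:A) - ι f₂) * z‖ := norm_mul_le _ _
              _ ≤ 1 * (ε/2) := mul_le_mul hf₁n hf₂ (norm_nonneg _) zero_le_one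
              _ = ε/2 := one_mul _
      _ = ε := add_halves ε
  | smul c y _hy hy =>
    intro ε hε
    obtain ⟨f, hfx, hfn, hfb⟩ := hy (ε / (‖c‖ + 1)) (by positivity)
    refine ⟨f, hfx, hfn, ?_⟩
    rw [mul_smul_comm, norm_smul]
    have hpos : (0:ℝ) < ‖c‖ + 1 := by positivity
    calc ‖c‖ * ‖((1:A) - ι f) * y‖ ≤ ‖c‖ * (ε / (‖c‖ + 1)) :=
          mul_le_mul_of_nonneg_left hfb (norm_nonneg c)
      _ ≤ (‖c‖ + 1) * (ε / (‖c‖ + 1)) :=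
          mul_le_mul_of_nonneg_right (by linarith) (by positivity)
      _ = ε := by rw [mul_comm, div_mul_cancel₀ _ hpos.ne']
  
/-- key approximation property on the closure -/
private lemma key_closure (hcentral : ∀ (f : C(X, ℂ)) (a : A), ι f * a = a * ι f)
    (x : X) {b : A} (hb : b ∈ Jc ι x) (ε : ℝ) (hε : 0 < ε) :
    ∃ f : C(X,ℂ), f x = 0 ∧ ‖(1:A) - ι f‖ ≤ 1 ∧ ‖((1:A) - ι f) * b‖ ≤ ε := by
  obtain ⟨b', hb', hbb'⟩ := Metric.mem_closure_iff.mp hb (ε/2) (by positivity)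
  obtain ⟨f, hfx, hfn, hfb⟩ := key_span ι hcentral x hb' (ε/2) (by positivity)
  refine ⟨f, hfx, hfn, ?_⟩
  have hsplit : b' + (b - b') = b := by abel
  calc ‖((1:A) - ι f) * b‖ = ‖((1:A) - ι f) * b' + ((1:A) - ι f) * (b - b')‖ := by
        rw [← mul_add, hsplit]
    _ ≤ ‖((1:A) - ι f) * b'‖ + ‖((1:A) - ι f) * (b - b')‖ := norm_add_le _ _
    _ ≤ ε/2 + ‖(1:A) - ι f‖ * ‖b - b'‖ := by gcongr; exact norm_mul_le _ _
    _ ≤ ε/2 + 1 * (ε/2) := by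
        gcongr
        rw [← dist_eq_norm]
        exact hbb'.le
    _ = ε := by ring

end Stmt7Proof

/-- For a unital `C(X)`-structure `ι` on a unital C*-algebra `A`
(a unital *-homomorphism with central range), for every `a ∈ A`:
(i) `‖a_x‖ = inf {‖(1 - ι f + f x • 1) * a‖ : f ∈ C(X,ℂ)}` for every `x`; and
(ii) `x ↦ ‖a_x‖` is upper semi-continuous. -/
theorem stmt7 (ι : C(X, ℂ) →⋆ₐ[ℂ] A)
    (hcentral : ∀ (f : C(X, ℂ)) (a : A), ι f * a = a * ι f) (a : A) :
    (∀ x : X, fiberNorm ι x a = ⨅ f : C(X, ℂ), ‖(1 - ι f + f x • (1 : A)) * a‖) ∧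
      UpperSemicontinuous fun x : X => fiberNorm ι x a := by
  have hbdd : ∀ x : X, BddBelow (Set.range fun f : C(X, ℂ) => ‖(1 - ι f + f x • (1 : A)) * a‖) :=
    fun x => ⟨0, by rintro r ⟨f, rfl⟩; positivity⟩
  have hle : ∀ x : X, ∀ f : C(X, ℂ), fiberNorm ι x a ≤ ‖(1 - ι f + f x • (1 : A)) * a‖ :=
    fun x f => fiberNorm_le' ι x a f
  have heq : ∀ x : X, fiberNorm ι x a = ⨅ f : C(X, ℂ), ‖(1 - ι f + f x • (1 : A)) * a‖ := by
    intro x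
    refine le_antisymm (le_ciInf (hle x)) ?_
    -- the infimum is at most the distance to any element of the ideal
    by_contra hcon
    push_neg at hcon
    rw [fiberNorm] at hcon
    obtain ⟨b, hbmem, hbd⟩ := (Metric.infDist_lt_iff ⟨0, zero_mem_fiberIdeal' ι x⟩).mp hcon
    -- b ∈ fiberIdeal, so the infimum should be ≤ dist a b
    have hkey : (⨅ f : C(X, ℂ), ‖(1 - ι f + f x • (1 : A)) * a‖) ≤ dist a b := by
      refine le_of_forall_pos_le_add ?_
      intro ε hε
      obtain ⟨f, hfx, hfn, hfb⟩ := key_closure ι hcentral x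
        (fiberIdeal_subset_Jc ι hcentral x hbmem) ε hε
      have h1 : (⨅ f : C(X, ℂ), ‖(1 - ι f + f x • (1 : A)) * a‖)
          ≤ ‖(1 - ι f + f x • (1 : A)) * a‖ := ciInf_le (hbdd x) f
      have h2 : (1 : A) - ι f + f x • (1 : A) = (1:A) - ι f := by
        rw [hfx]; simp
      rw [h2] at h1
      refine h1.trans ?_
      have hsplit : a - b + b = a := by abel
      calc ‖((1:A) - ι f) * a‖ = ‖((1:A) - ι f) * (a - b) + ((1:A) - ι f) * b‖ := by
            rw [← mul_add, hsplit]
        _ ≤ ‖((1:A) - ι f) * (a - b)‖ + ‖((1:A) - ι f) * b‖ := norm_add_le _ _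
        _ ≤ ‖(1:A) - ι f‖ * ‖a - b‖ + ε := by gcongr; exact norm_mul_le _ _
        _ ≤ 1 * ‖a - b‖ + ε := by gcongr
        _ = dist a b + ε := by rw [one_mul, dist_eq_norm]
    exact absurd hkey (not_le.mpr hbd)
  refine ⟨heq, ?_⟩
  intro x₀ y hy
  have hy' : fiberNorm ι x₀ a < y := hy
  rw [heq x₀] at hy'
  obtain ⟨f, hf⟩ := exists_lt_of_ciInf_lt hy'
  have hcont : Continuous fun x : X => ‖(1 - ι f + f x • (1 : A)) * a‖ := by
    fun_prop
  have hopen : IsOpen {x : X | ‖(1 - ι f + f x • (1 : A)) * a‖ < y} :=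
    isOpen_lt hcont continuous_const
  filter_upwards [hopen.mem_nhds hf] with x hx
  exact lt_of_le_of_lt (hle x f) hx
end

section
/- Let X be a compact Hausdorff space, A a unital C*-algebra with a unital C(X)-structure ι : C(X,ℂ) → A, and let complex Hilbert spaces H_x (x ∈ X) together with unital *-homomorphisms σ_x : A → B(H_x) satisfy σ_x(ι f) = f(x)·1 for every f ∈ C(X,ℂ) and x ∈ X, and be such that for every a ∈ A the function x ↦ ‖σ_x(a)‖ is lower semi-continuous. If moreover the kernel of σ_x equals I_x for every x ∈ X, then for every a ∈ A the function x ↦ ‖σ_x(a)‖ is continuous on X, and it coincides with x ↦ ‖a_x‖. -/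
/-! For a *-homomorphism `φ` between C*-algebras, `‖φ a‖` is the distance from `a` to `ker φ`:
given `ε > 0`, a continuous cut-off `g` equal to `1` on `[0, ‖φ a‖²]` with `s g(s)² ≤ (‖φ a‖ + ε)²`
makes `a - a g(a⋆a)` an element of the kernel at distance at most `‖φ a‖ + ε` from `a`. With
`ker σ_x = I_x` this identifies `‖σ_x a‖` with the fibre norm `‖a_x‖`.

Fibre norms are upper semicontinuous: the elements `b` with `dist (b, I_y) → 0` as `y → x` form a
closed two-sided ideal containing every `ι f` with `f x = 0`, hence containing `I_x`. Together with
the assumed lower semicontinuity this gives continuity. -/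

variable {X : Type*} [TopologicalSpace X] [CompactSpace X] [T2Space X]
variable {A : Type*} [CStarAlgebra A]

open Metric Set Filter Topology

set_option linter.unusedSectionVars false

theorem Metric.infDist_le_mul_infDist_of_mapsTo {α β : Type*} [PseudoMetricSpace α]
    [PseudoMetricSpace β] {f : α → β} {K : NNReal} (hf : LipschitzWith K f) {s : Set α}
    {t : Set β} (hst : MapsTo f s t) (hs : s.Nonempty) (x : α) :
    infDist (f x) t ≤ K * infDist x s := by
  have := hs.to_subtype
  rw [infDist_eq_iInf (s := s), Real.mul_iInf_of_nonneg K.coe_nonneg]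
  exact le_ciInf fun y => (infDist_le_dist_of_mem (hst y.2)).trans (hf.dist_le_mul x y)

namespace TwoSidedIdeal

section InfDist

variable {R : Type*} [SeminormedRing R] (I : TwoSidedIdeal R)

theorem infDist_add_le (b c : R) : infDist (b + c) I ≤ infDist b I + infDist c I := by
  have h := norm_add_le (b : R ⧸ I.asIdeal.toAddSubgroup) c
  rwa [← QuotientAddGroup.mk_add, QuotientAddGroup.norm_mk, QuotientAddGroup.norm_mk,
    QuotientAddGroup.norm_mk] at h

theorem infDist_mul_left_le (c b : R) : infDist (c * b) I ≤ ‖c‖ * infDist b I :=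
  infDist_le_mul_infDist_of_mapsTo (lipschitzWith_smul c) (fun _ hd => I.mul_mem_left c _ hd)
    ⟨0, I.zero_mem⟩ b

theorem infDist_mul_right_le (b c : R) : infDist (b * c) I ≤ infDist b I * ‖c‖ := by
  rw [mul_comm]
  refine infDist_le_mul_infDist_of_mapsTo (f := (· * c)) (K := ‖c‖₊)
    (LipschitzWith.of_dist_le_mul fun d e => ?_) (fun _ hd => I.mul_mem_right _ c hd)
    ⟨0, I.zero_mem⟩ b
  rw [dist_eq_norm, dist_eq_norm, ← sub_mul, mul_comm, coe_nnnorm]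
  exact norm_mul_le _ _

end InfDist

section LowerLimit

variable {R Y : Type*} [SeminormedRing R] (I : Y → TwoSidedIdeal R) (l : Filter Y)

def lowerLimit : TwoSidedIdeal R :=
  have mul_mem_left {c b : R} (hb : Tendsto (fun y => infDist b (I y)) l (𝓝 0)) :
      Tendsto (fun y => infDist (c * b) (I y)) l (𝓝 0) :=
    squeeze_zero (fun _ => infDist_nonneg) (fun y => (I y).infDist_mul_left_le c b)
      (by simpa using hb.const_mul ‖c‖)
  mk' {b | Tendsto (fun y => infDist b (I y)) l (𝓝 0)}
    (by simpa [infDist_zero_of_mem (I _).zero_mem] using tendsto_const_nhds)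
    (fun hb hc => squeeze_zero (fun _ => infDist_nonneg) (fun y => (I y).infDist_add_le _ _)
      (by simpa using hb.add hc))
    (fun hb => by simpa using mul_mem_left (c := -1) hb)
    mul_mem_left
    (fun {b c} hb => squeeze_zero (fun _ => infDist_nonneg)
      (fun y => (I y).infDist_mul_right_le b c) (by simpa using hb.mul_const ‖c‖))

variable {I l}

theorem mem_lowerLimit {b : R} :
    b ∈ lowerLimit I l ↔ Tendsto (fun y => infDist b (I y)) l (𝓝 0) := by
  rw [lowerLimit, mem_mk']
  rfl

theorem isClosed_lowerLimit : IsClosed (lowerLimit I l : Set R) := by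
  refine isClosed_of_closure_subset fun b hb => mem_lowerLimit.2 <| tendsto_order.2
    ⟨fun e he => .of_forall fun y => he.trans_le infDist_nonneg, fun ε hε => ?_⟩
  obtain ⟨d, hd, hbd⟩ := Metric.mem_closure_iff.1 hb (ε / 2) (half_pos hε)
  filter_upwards [(mem_lowerLimit.1 hd).eventually_lt_const (half_pos hε)] with y hy
  linarith [infDist_le_infDist_add_dist (x := b) (y := d) (s := I y)]

end LowerLimit

end TwoSidedIdeal

theorem exists_continuous_eq_one_mul_sq_le {r R : ℝ} (hrR : r < R) (hR : 0 ≤ R) :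
    ∃ g : ℝ → ℝ, Continuous g ∧ (∀ s ≤ r, g s = 1) ∧ ∀ s, 0 ≤ s → s * g s ^ 2 ≤ R := by
  refine ⟨fun s => max 0 (min 1 ((R - s) / (R - r))), by fun_prop, fun s hs => ?_,
    fun s hs => ?_⟩ <;> dsimp only
  · rw [min_eq_left ((one_le_div (by linarith)).2 (by linarith)), max_eq_right zero_le_one]
  rcases le_or_gt s R with hsR | hRs
  · have h0 : 0 ≤ max 0 (min 1 ((R - s) / (R - r))) := le_max_left _ _
    have h1 : max 0 (min 1 ((R - s) / (R - r))) ≤ 1 := max_le zero_le_one (min_le_left _ _)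
    nlinarith [pow_le_one₀ (n := 2) h0 h1]
  · rw [max_eq_left (min_le_of_right_le
      (div_nonpos_of_nonpos_of_nonneg (by linarith) (by linarith)))]
    simpa using hR

theorem norm_mul_cfc_star_mul_self_sq (a : A) (g : ℝ → ℝ) (hg : Continuous g) :
    ‖a * cfc g (star a * a)‖ ^ 2 = ‖cfc (fun s => s * g s ^ 2) (star a * a)‖ := by
  have hc : IsSelfAdjoint (star a * a) := .star_mul_self a
  have hsa : IsSelfAdjoint (cfc g (star a * a)) := cfc_predicate g _
  have : cfc (fun s => s * g s ^ 2) (star a * a) =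
      cfc g (star a * a) * (star a * a * cfc g (star a * a)) := by
    rw [show (fun s => s * g s ^ 2) = fun s => g s * (s * g s) by ext; ring,
      cfc_mul g (fun s => s * g s), cfc_mul (fun s => s) g, cfc_id' ℝ _ hc]
  rw [this, sq, ← CStarRing.norm_star_mul_self, star_mul, hsa.star_eq]
  simp only [mul_assoc]

theorem spectrum_star_mul_self_le_norm_sq (a : A) :
    ∀ s ∈ spectrum ℝ (star a * a), s ≤ ‖a‖ ^ 2 := by
  nontriviality A
  intro s hs
  rw [sq, ← CStarRing.norm_star_mul_self]
  exact (Real.le_norm_self s).trans (spectrum.norm_le_norm_of_mem hs)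

open scoped CStarAlgebra in
theorem StarAlgHom.norm_apply_eq_infDist_ker {B : Type*} [CStarAlgebra B] (φ : A →⋆ₐ[ℂ] B)
    (a : A) : ‖φ a‖ = infDist a {b : A | φ b = 0} := by
  refine le_antisymm ((le_infDist (s := {b : A | φ b = 0}) ⟨0, map_zero φ⟩).2
    fun b hb => ?_) (le_of_forall_pos_le_add fun ε hε => ?_)
  · simpa [show φ b = 0 from hb, dist_eq_norm] using NonUnitalStarAlgHom.norm_apply_le φ (a - b)
  obtain ⟨g, hg, hg_one, hg_le⟩ := exists_continuous_eq_one_mul_sq_le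
    (show ‖φ a‖ ^ 2 < (‖φ a‖ + ε) ^ 2 by gcongr; linarith) (by positivity)
  -- `g = 1` on the spectrum of `φ (a⋆a)`, so `a * cfc g (a⋆a)` agrees with `a` modulo `ker φ`
  have hker : φ (a - a * cfc g (star a * a)) = 0 := by
    have : φ (cfc g (star a * a)) = 1 := by
      rw [StarAlgHom.map_cfc φ g _ (hφ := map_continuous φ)
          (hφa := (IsSelfAdjoint.star_mul_self a).map φ),
        map_mul, map_star, ← cfc_const_one ℝ (star (φ a) * φ a)]
      exact cfc_congr fun s hs => hg_one s (spectrum_star_mul_self_le_norm_sq _ s hs)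
    rw [map_sub, map_mul, this, mul_one, sub_self]
  refine (infDist_le_dist_of_mem (s := {b : A | φ b = 0}) hker).trans ?_
  rw [dist_eq_norm, sub_sub_cancel]
  refine le_of_sq_le_sq ?_ (by positivity)
  rw [norm_mul_cfc_star_mul_self_sq a g hg]
  refine norm_cfc_le (by positivity) fun s hs => ?_
  have hs0 := spectrum_star_mul_self_nonneg s hs
  rw [Real.norm_of_nonneg (by positivity)]
  exact hg_le s hs0

section Fibre

variable (ι : C(X, ℂ) →⋆ₐ[ℂ] A)

theorem fiberIdeal_subset {x : X} (I : TwoSidedIdeal A) (hI : IsClosed (I : Set A))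
    (hgen : ∀ f : C(X, ℂ), f x = 0 → ι f ∈ I) : fiberIdeal ι x ⊆ I :=
  sInter_subset_of_mem ⟨hI, ⟨I, rfl⟩, by rintro _ ⟨f, hf, rfl⟩; exact hgen f hf⟩

theorem apply_mem_fiberIdeal {x : X} {f : C(X, ℂ)} (hf : f x = 0) : ι f ∈ fiberIdeal ι x :=
  mem_sInter.2 fun _ ⟨_, _, hgen⟩ => hgen ⟨f, hf, rfl⟩

theorem exists_twoSidedIdeal_coe_eq_fiberIdeal (x : X) :
    ∃ I : TwoSidedIdeal A, (I : Set A) = fiberIdeal ι x := by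
  refine ⟨sInf {I | IsClosed (I : Set A) ∧ ∀ f : C(X, ℂ), f x = 0 → ι f ∈ I},
    Subset.antisymm (fun b hb => mem_sInter.2 ?_) fun b hb =>
      (TwoSidedIdeal.mem_sInf A).2 fun I ⟨hI, hgen⟩ => fiberIdeal_subset ι I hI hgen hb⟩
  rintro _ ⟨hS, ⟨I, rfl⟩, hgen⟩
  exact (TwoSidedIdeal.mem_sInf A).1 hb I ⟨hS, fun f hf => hgen ⟨f, hf, rfl⟩⟩

theorem infDist_apply_fiberIdeal_le (f : C(X, ℂ)) (y : X) :
    infDist (ι f) (fiberIdeal ι y) ≤ ‖f y‖ := by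
  have hmem : ι (f - algebraMap ℂ C(X, ℂ) (f y)) ∈ fiberIdeal ι y :=
    apply_mem_fiberIdeal ι (by simp)
  refine (infDist_le_dist_of_mem hmem).trans ?_
  rw [dist_eq_norm, ← map_sub, sub_sub_cancel]
  exact (NonUnitalStarAlgHom.norm_apply_le ι _).trans
    ((ContinuousMap.norm_le _ (norm_nonneg _)).2 fun z => by simp)

theorem tendsto_infDist_fiberIdeal {x : X} {b : A} (hb : b ∈ fiberIdeal ι x) :
    Tendsto (fun y => infDist b (fiberIdeal ι y)) (𝓝 x) (𝓝 0) := by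
  choose I hI using exists_twoSidedIdeal_coe_eq_fiberIdeal ι
  have hsub : fiberIdeal ι x ⊆ TwoSidedIdeal.lowerLimit I (𝓝 x) :=
    fiberIdeal_subset ι _ TwoSidedIdeal.isClosed_lowerLimit fun f hf =>
      TwoSidedIdeal.mem_lowerLimit.2 <| squeeze_zero (g := fun y => ‖f y‖)
        (fun _ => infDist_nonneg) (fun y => by rw [hI]; exact infDist_apply_fiberIdeal_le ι f y)
        (by simpa [hf] using (map_continuous f).norm.tendsto x)
  simpa only [hI] using TwoSidedIdeal.mem_lowerLimit.1 (hsub hb)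

theorem upperSemicontinuous_fiberNorm (a : A) :
    UpperSemicontinuous fun x => fiberNorm ι x a := by
  intro x c hc
  have h0 : (0 : A) ∈ fiberIdeal ι x := by simpa using apply_mem_fiberIdeal ι (f := 0) rfl
  obtain ⟨b, hb, hab⟩ := (infDist_lt_iff ⟨0, h0⟩).1 hc
  filter_upwards [(tendsto_infDist_fiberIdeal ι hb).eventually_lt_const (sub_pos.2 hab)]
    with y hy
  exact infDist_le_infDist_add_dist.trans_lt (by linarith)

end Fibre

theorem stmt8_general (ι : C(X, ℂ) →⋆ₐ[ℂ] A)
    (H : X → Type*) [∀ x, NormedAddCommGroup (H x)] [∀ x, InnerProductSpace ℂ (H x)]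
    [∀ x, CompleteSpace (H x)]
    (σ : ∀ x : X, A →⋆ₐ[ℂ] (H x →L[ℂ] H x))
    (hlsc : ∀ a : A, LowerSemicontinuous fun x : X => ‖σ x a‖)
    (hker : ∀ x : X, {a : A | σ x a = 0} = fiberIdeal ι x) (a : A) :
    Continuous (fun x : X => ‖σ x a‖) ∧ ∀ x : X, ‖σ x a‖ = fiberNorm ι x a := by
  have hnorm (x : X) : ‖σ x a‖ = fiberNorm ι x a := by
    rw [StarAlgHom.norm_apply_eq_infDist_ker, hker, fiberNorm]
  refine ⟨continuous_iff_lower_upperSemicontinuous.2 ⟨hlsc a, ?_⟩, hnorm⟩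
  simpa only [hnorm] using upperSemicontinuous_fiberNorm ι a

/-- Let `ι : C(X,ℂ) → A` be a unital `C(X)`-structure on a unital
C*-algebra `A`, and let `σ_x : A → B(H_x)` be unital *-homomorphisms with
`σ_x (ι f) = f x • 1`, such that `x ↦ ‖σ_x a‖` is lower semi-continuous for every `a`.
If moreover `ker σ_x = I_x` for every `x`, then for every `a ∈ A` the function
`x ↦ ‖σ_x a‖` is continuous and coincides with `x ↦ ‖a_x‖`. -/
theorem stmt8 (ι : C(X, ℂ) →⋆ₐ[ℂ] A)
    (hcentral : ∀ (f : C(X, ℂ)) (a : A), ι f * a = a * ι f)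
    (H : X → Type*) [∀ x, NormedAddCommGroup (H x)] [∀ x, InnerProductSpace ℂ (H x)]
    [∀ x, CompleteSpace (H x)]
    (σ : ∀ x : X, A →⋆ₐ[ℂ] (H x →L[ℂ] H x))
    (hσι : ∀ (x : X) (f : C(X, ℂ)), σ x (ι f) = f x • 1)
    (hlsc : ∀ a : A, LowerSemicontinuous fun x : X => ‖σ x a‖)
    (hker : ∀ x : X, {a : A | σ x a = 0} = fiberIdeal ι x) (a : A) :
    Continuous (fun x : X => ‖σ x a‖) ∧ ∀ x : X, ‖σ x a‖ = fiberNorm ι x a :=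
  stmt8_general ι H σ hlsc hker a
end

section
/- Let X be a compact Hausdorff space, A a unital C*-algebra with a unital C(X)-structure ι : C(X,ℂ) → A, x ∈ X, and let φ be a state on A such that φ(ι f) = f(x) for every f ∈ C(X,ℂ). Then φ vanishes on the ideal I_x, i.e. φ(a) = 0 for every a ∈ I_x. -/
variable {X : Type*} [TopologicalSpace X] [CompactSpace X] [T2Space X]
variable {A : Type*} [CStarAlgebra A]

/-- A state on a unital C*-algebra `A`: a linear functional `φ : A → ℂ` with `φ 1 = 1`
and `φ (a* a) ≥ 0` (a nonnegative real number) for every `a`. -/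
def IsState (φ : A → ℂ) : Prop :=
  φ 1 = 1 ∧ ∀ a : A, ∃ r : ℝ, 0 ≤ r ∧ φ (star a * a) = (r : ℂ)

/-! If `f x = 0` then `φ (star (ι f) * ι f) = |f x|² = 0`, so by the Cauchy–Schwarz inequality
for the positive functional `φ` we get `φ (y * ι f) = 0` for all `y`, and centrality of `ι f`
upgrades this to `φ (b * ι f * c) = φ (b * c * ι f) = 0`. Thus every such `ι f` lies in the largest
two-sided ideal `{a | ∀ b c, φ (b * a * c) = 0}` contained in `ker φ`; that ideal is closed because
positive functionals are bounded, hence it contains `I_x`. -/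

open scoped ComplexOrder

namespace LinearMap

variable {R B M : Type*} [Semiring R] [NonUnitalRing B] [Module R B] [AddCommGroup M] [Module R M]

def idealKer (φ : B →ₗ[R] M) : TwoSidedIdeal B :=
  .mk' {a | ∀ b c, φ (b * a * c) = 0} (by simp)
    (fun {u v} hu hv b c => by rw [mul_add, add_mul, map_add, hu b c, hv b c, add_zero])
    (fun {u} hu b c => by rw [mul_neg, neg_mul, map_neg, hu b c, neg_zero])
    (fun {u v} hv b c => by simpa only [mul_assoc] using hv (b * u) c)
    (fun {u v} hu b c => by simpa only [mul_assoc] using hu b (v * c))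

theorem mem_idealKer {φ : B →ₗ[R] M} {a : B} : a ∈ φ.idealKer ↔ ∀ b c, φ (b * a * c) = 0 :=
  TwoSidedIdeal.mem_mk' ..

theorem apply_eq_zero_of_mem_idealKer {B : Type*} [Ring B] [Module R B] {φ : B →ₗ[R] M} {a : B}
    (ha : a ∈ φ.idealKer) : φ a = 0 := by
  simpa using mem_idealKer.mp ha 1 1

theorem isClosed_idealKer [TopologicalSpace B] [ContinuousMul B] [TopologicalSpace M]
    [T1Space M] {φ : B →ₗ[R] M} (hφ : Continuous φ) : IsClosed (φ.idealKer : Set B) := by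
  have : (φ.idealKer : Set B) = ⋂ (b : B) (c : B), {a | φ (b * a * c) = 0} := by
    ext; simp [mem_idealKer]
  rw [this]
  exact isClosed_iInter fun b => isClosed_iInter fun c =>
    isClosed_singleton.preimage (by fun_prop)

end LinearMap

theorem IsState.map_nonneg [PartialOrder A] [StarOrderedRing A] {φ : A →ₗ[ℂ] ℂ}
    (hφ : IsState (⇑φ)) {a : A} (ha : 0 ≤ a) : 0 ≤ φ a := by
  rw [StarOrderedRing.nonneg_iff] at ha
  induction ha using AddSubmonoid.closure_induction with
  | mem _ hs =>
    obtain ⟨c, rfl⟩ := hs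
    obtain ⟨r, hr, h⟩ := hφ.2 c
    exact h ▸ Complex.zero_le_real.mpr hr
  | zero => simp
  | add _ _ _ _ hu hv => simpa using add_nonneg hu hv

noncomputable def IsState.toPositiveLinearMap [PartialOrder A] [StarOrderedRing A]
    {φ : A →ₗ[ℂ] ℂ} (hφ : IsState (⇑φ)) : A →ₚ[ℂ] ℂ :=
  .mk₀ φ fun _ => hφ.map_nonneg

theorem PositiveLinearMap.apply_star_mul_eq_zero {B : Type*} [NonUnitalCStarAlgebra B]
    [PartialOrder B] [StarOrderedRing B] (f : B →ₚ[ℂ] ℂ) {z : B} (hz : f (star z * z) = 0)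
    (y : B) : f (star y * z) = 0 := by
  have hnorm : ‖f.toPreGNS z‖ = 0 := by
    have h := f.preGNS_norm_sq (f.toPreGNS z)
    rw [f.ofPreGNS_toPreGNS, hz] at h
    exact pow_eq_zero_iff two_ne_zero |>.mp (mod_cast h)
  have := norm_inner_le_norm (𝕜 := ℂ) (f.toPreGNS y) (f.toPreGNS z)
  rw [hnorm, mul_zero] at this
  exact norm_le_zero_iff.mp this

theorem PositiveLinearMap.mem_idealKer_of_commute {B : Type*} [NonUnitalCStarAlgebra B]
    [PartialOrder B] [StarOrderedRing B] (f : B →ₚ[ℂ] ℂ) {z : B} (hz : ∀ a, Commute z a)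
    (hzz : f (star z * z) = 0) : z ∈ f.toLinearMap.idealKer := by
  refine LinearMap.mem_idealKer.mpr fun b c => ?_
  have := f.apply_star_mul_eq_zero hzz (star (b * c))
  rwa [star_star, mul_assoc, ← (hz c).eq, ← mul_assoc] at this

/-- If `φ` is a state on `A` with `φ (ι f) = f x` for all `f ∈ C(X,ℂ)`,
then `φ` vanishes on the fibre ideal `I_x`. -/
theorem stmt10 (ι : C(X, ℂ) →⋆ₐ[ℂ] A)
    (hcentral : ∀ (f : C(X, ℂ)) (a : A), ι f * a = a * ι f)
    (x : X) (φ : A →ₗ[ℂ] ℂ) (hφ : IsState (⇑φ))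
    (hφx : ∀ f : C(X, ℂ), φ (ι f) = f x) :
    ∀ a ∈ fiberIdeal ι x, φ a = 0 := by
  let _ := CStarAlgebra.spectralOrder A
  have _ := CStarAlgebra.spectralOrderedRing A
  let ψ := hφ.toPositiveLinearMap
  have hI : fiberIdeal ι x ⊆ φ.idealKer := by
    refine Set.sInter_subset_of_mem ⟨φ.isClosed_idealKer (map_continuous ψ), ⟨_, rfl⟩, ?_⟩
    rintro _ ⟨f, hfx, rfl⟩
    refine ψ.mem_idealKer_of_commute (hcentral f) ?_
    change φ (star (ι f) * ι f) = 0
    rw [← map_star, ← map_mul, hφx]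
    simp [hfx]
  exact fun a ha => LinearMap.apply_eq_zero_of_mem_idealKer (hI ha)
end
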